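/- Let G be a finite simple graph with nonempty vertex set. Then Z*(G) = 1 if and only if G is a path graph (i.e., G is isomorphic to the path P_n on n vertices for some n ≥ 1). -/

import Mathlib

open Finset

/-- A fort of a graph: a nonempty (finite) set of vertices `F` such that no vertex
outside `F` has exactly one neighbor in `F`. -/
def IsFort {V : Type*} (G : SimpleGraph V) (F : Finset V) : Prop :=
  F.Nonempty ∧ ∀ v ∉ F, ¬ ∃! u, u ∈ F ∧ G.Adj v u

/-- The fort number: the maximum cardinality of a collection of pairwise disjoint forts. -/
noncomputable def fortNumber {V : Type*} (G : SimpleGraph V) : ℕ :=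
  sSup {k | ∃ 𝒞 : Finset (Finset V), (∀ F ∈ 𝒞, IsFort G F) ∧
    (↑𝒞 : Set (Finset V)).Pairwise Disjoint ∧ 𝒞.card = k}

/-- The fractional zero forcing number. -/
noncomputable def fracZ {V : Type*} [Fintype V] (G : SimpleGraph V) : ℝ :=
  sInf {x : ℝ | ∃ ω : V → ℝ, (∀ v, 0 ≤ ω v) ∧
    (∀ F : Finset V, IsFort G F → 1 ≤ ∑ v ∈ F, ω v) ∧ x = ∑ v, ω v}

/-- The set of vertices eventually filled by the zero forcing process started at `S`. -/
inductive ZFForced {V : Type*} (G : SimpleGraph V) (S : Set V) : V → Prop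
  | init (v : V) : v ∈ S → ZFForced G S v
  | force (u w : V) : G.Adj u w → ZFForced G S u →
      (∀ x, G.Adj u x → x ≠ w → ZFForced G S x) → ZFForced G S w

/-- A zero forcing set: starting from `S`, every vertex is eventually filled. -/
def IsZeroForcingSet {V : Type*} (G : SimpleGraph V) (S : Set V) : Prop :=
  ∀ v, ZFForced G S v

/-- The zero forcing number: minimum cardinality of a zero forcing set. -/
noncomputable def zfNumber {V : Type*} (G : SimpleGraph V) : ℕ :=
  sInf {k | ∃ S : Finset V, IsZeroForcingSet G ↑S ∧ S.card = k}


/-!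
Forts are the obstructions to zero forcing: a set of vertices forces the whole graph iff it
meets every fort, because the vertices never forced from `S` form a fort whenever there are
any. Hence `Z*(G) ≤ Z(G)`, and on a path the endpoint alone forces everything, so
`Z*(Pₙ) ≤ 1`; the whole vertex set is a fort, so `Z* ≥ 1` always.

Conversely, if a single vertex `s` forces `G`, then `s` has exactly one neighbour `t`, and `t`
forces `G - s`; by induction `G - s` is a path starting at `t`, so `G` is a path starting at `s`.
If `G` is not a path, every vertex `v` is therefore avoided by some fort, so a feasible weight
`ω` satisfies `1 + ω v ≤ ω(V)`; summing over the `n ≥ 2` vertices gives `ω(V) ≥ n / (n - 1) > 1`.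
-/

open Finset SimpleGraph

section Forcing

variable {V W : Type*} {G : SimpleGraph V} {S : Set V}

theorem ZFForced.notMem_of_isFort {F : Finset V} (hF : IsFort G F) (hSF : ∀ v ∈ S, v ∉ F)
    {x : V} (hx : ZFForced G S x) : x ∉ F := by
  induction hx with
  | init v hv => exact hSF v hv
  | force u w hadj _ _ ihu ihx =>
    intro hw
    refine hF.2 u ihu ⟨w, ⟨hw, hadj⟩, fun y ⟨hyF, hy⟩ => ?_⟩
    by_contra hyw
    exact ihx y hy hyw hyF

theorem IsZeroForcingSet.exists_mem_of_isFort (hS : IsZeroForcingSet G S) {F : Finset V}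
    (hF : IsFort G F) : ∃ v ∈ S, v ∈ F := by
  by_contra! hSF
  obtain ⟨x, hx⟩ := hF.1
  exact (hS x).notMem_of_isFort hF hSF hx

theorem exists_isFort_of_not_isZeroForcingSet [Fintype V] (hS : ¬ IsZeroForcingSet G S) :
    ∃ F : Finset V, IsFort G F ∧ ∀ v ∈ S, v ∉ F := by
  classical
  refine ⟨univ.filter (¬ ZFForced G S ·), ⟨?_, fun v hv ⟨u, ⟨huF, hvu⟩, huniq⟩ => ?_⟩,
    fun v hv => ?_⟩
  · obtain ⟨x, hx⟩ := not_forall.mp hS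
    exact ⟨x, by simpa using hx⟩
  · simp only [mem_filter, mem_univ, true_and, not_not] at hv huF
    refine huF (.force v u hvu hv fun x hx hxu => ?_)
    by_contra hxF
    exact hxu (huniq x ⟨by simpa using hxF, hx⟩)
  · simpa using ZFForced.init v hv

theorem ZFForced.map {H : SimpleGraph W} (e : G ≃g H) {x : V} (hx : ZFForced G S x) :
    ZFForced H (e '' S) (e x) := by
  induction hx with
  | init v hv => exact .init _ (Set.mem_image_of_mem e hv)
  | force u w hadj _ _ ihu ihx =>
    refine .force _ _ (e.map_adj_iff.mpr hadj) ihu fun y hy hyw => ?_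
    rw [← e.apply_symm_apply y] at hy hyw ⊢
    exact ihx _ (e.map_adj_iff.mp hy) fun h => hyw (congrArg e h)

theorem IsZeroForcingSet.map {H : SimpleGraph W} (e : G ≃g H) (hS : IsZeroForcingSet G S) :
    IsZeroForcingSet H (e '' S) :=
  fun y => e.apply_symm_apply y ▸ (hS _).map e

theorem isZeroForcingSet_pathGraph_zero (n : ℕ) : IsZeroForcingSet (pathGraph (n + 1)) {0} := by
  suffices h : ∀ k, ∀ i : Fin (n + 1), i.val ≤ k → ZFForced (pathGraph (n + 1)) {0} i from
    fun i => h i i le_rfl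
  intro k
  induction k with
  | zero => exact fun i hi => .init _ (Fin.ext (Nat.le_zero.mp hi))
  | succ k ih =>
    intro i hi
    rcases Nat.lt_or_ge i.val (k + 1) with hlt | hge
    · exact ih i (Nat.lt_succ_iff.mp hlt)
    · have hk : k < n + 1 := by omega
      refine .force ⟨k, hk⟩ i (by simp only [pathGraph_adj]; omega) (ih _ le_rfl)
        fun x hx hxi => ih x ?_
      simp only [pathGraph_adj] at hx
      have := Fin.val_ne_of_ne hxi
      omega

theorem ZFForced.eq_of_not_existsUnique_adj {s x : V} (hs : ¬ ∃! t, G.Adj s t)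
    (hx : ZFForced G {s} x) : x = s := by
  induction hx with
  | init v hv => exact hv
  | force u w hadj _ _ ihu ihx =>
    subst ihu
    refine absurd ⟨w, hadj, fun y hy => ?_⟩ hs
    by_contra hyw
    exact G.ne_of_adj hy (ihx y hy hyw).symm

theorem IsZeroForcingSet.induce_ne {s t : V} (hS : IsZeroForcingSet G {s})
    (hst : ∀ w, G.Adj s w → w = t) (ht : t ≠ s) :
    IsZeroForcingSet (G.induce {x | x ≠ s}) {⟨t, ht⟩} := by
  suffices h : ∀ x, ZFForced G {s} x →
      ∀ hx : x ≠ s, ZFForced (G.induce {x | x ≠ s}) {⟨t, ht⟩} ⟨x, hx⟩ from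
    fun x => h x (hS x) x.2
  intro x hx
  induction hx with
  | init v hv => exact fun h => absurd hv h
  | force u w hadj _ _ ihu ihx =>
    intro hw
    by_cases hus : u = s
    · subst hus
      obtain rfl := hst w hadj
      exact .init _ rfl
    · exact .force (⟨u, hus⟩ : {x // x ≠ s}) (⟨w, hw⟩ : {x // x ≠ s}) hadj (ihu hus)
        fun y hy hyw => ihx y hy (fun h => hyw (Subtype.ext h)) y.2

end Forcing

section Path

variable {V : Type*}

theorem pathGraph_succ_adj_succ {n : ℕ} {i j : Fin n} :
    (pathGraph (n + 1)).Adj i.succ j.succ ↔ (pathGraph n).Adj i j := by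
  simp [pathGraph_adj]

theorem pathGraph_zero_adj_succ {n : ℕ} {j : Fin (n + 1)} :
    (pathGraph (n + 2)).Adj 0 j.succ ↔ j = 0 := by
  rw [pathGraph_adj, Fin.ext_iff]
  simp

theorem exists_iso_pathGraph_of_induce_ne {G : SimpleGraph V} {n : ℕ} {s t : V} (ht : t ≠ s)
    (hst : ∀ w, G.Adj s w ↔ w = t) (e : G.induce {x | x ≠ s} ≃g pathGraph (n + 1))
    (he : e ⟨t, ht⟩ = 0) : ∃ f : G ≃g pathGraph (n + 2), f s = 0 := by
  classical
  have hs_adj (y : {x // x ≠ s}) : G.Adj s y ↔ e y = 0 := by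
    rw [hst, ← he, e.apply_eq_iff_eq, Subtype.ext_iff]
  let φ : Option {x // x ≠ s} ≃ V := Equiv.optionSubtypeNe s
  refine ⟨⟨φ.symm.trans (e.toEquiv.optionCongr.trans (finSuccEquiv (n + 1)).symm), ?_⟩, ?_⟩
  · intro a b
    obtain ⟨oa, rfl⟩ := φ.surjective a
    obtain ⟨ob, rfl⟩ := φ.surjective b
    simp only [Equiv.trans_apply, Equiv.symm_apply_apply, Equiv.optionCongr_apply]
    rcases oa with _ | x <;> rcases ob with _ | y
    · simp [φ]
    · simp only [Option.map_none, Option.map_some, finSuccEquiv_symm_none, finSuccEquiv_symm_some]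
      exact pathGraph_zero_adj_succ.trans (hs_adj y).symm
    · simp only [Option.map_none, Option.map_some, finSuccEquiv_symm_none, finSuccEquiv_symm_some]
      rw [adj_comm, pathGraph_zero_adj_succ, G.adj_comm]
      exact (hs_adj x).symm
    · simp only [Option.map_some, finSuccEquiv_symm_some]
      exact pathGraph_succ_adj_succ.trans e.map_adj_iff
  · simp [φ]

theorem exists_iso_pathGraph_of_isZeroForcingSet_singleton [Fintype V] {G : SimpleGraph V} {s : V}
    (hS : IsZeroForcingSet G {s}) : ∃ e : G ≃g pathGraph (Fintype.card V), (e s : ℕ) = 0 := by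
  classical
  induction hcard : Fintype.card V generalizing V with
  | zero => exact absurd hcard (Fintype.card_pos_iff.mpr ⟨s⟩).ne'
  | succ n ih =>
    rcases n with _ | n
    · have : Subsingleton V := Fintype.card_le_one_iff_subsingleton.mp hcard.le
      exact ⟨⟨Fintype.equivFinOfCardEq hcard, fun {a b} => by simp [Subsingleton.elim a b]⟩,
        Fin.val_eq_zero _⟩
    · obtain ⟨t, hst, huniq⟩ : ∃! t, G.Adj s t := by
        by_contra hs
        obtain ⟨x, hx⟩ := Fintype.exists_ne_of_one_lt_card (by omega) s
        exact hx ((hS x).eq_of_not_existsUnique_adj hs)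
      have ht : t ≠ s := (G.ne_of_adj hst).symm
      obtain ⟨e, he⟩ := ih (hS.induce_ne huniq ht) (by rw [Set.card_ne_eq, hcard]; rfl)
      obtain ⟨f, hf⟩ := exists_iso_pathGraph_of_induce_ne ht
        (fun w => ⟨huniq w, fun h => h ▸ hst⟩) e (Fin.ext he)
      exact ⟨f, congrArg Fin.val hf⟩

end Path

section Fractional

variable {V : Type*} [Fintype V] (G : SimpleGraph V)

theorem le_fracZ {c : ℝ} (h : ∀ ω : V → ℝ, (∀ v, 0 ≤ ω v) →
    (∀ F : Finset V, IsFort G F → 1 ≤ ∑ v ∈ F, ω v) → c ≤ ∑ v, ω v) : c ≤ fracZ G := by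
  refine le_csInf ⟨_, fun _ => 1, fun _ => zero_le_one, fun F hF => ?_, rfl⟩ ?_
  · simpa using hF.1.card_pos
  · rintro _ ⟨ω, hω, hF, rfl⟩
    exact h ω hω hF

theorem fracZ_le {ω : V → ℝ} (hω : ∀ v, 0 ≤ ω v)
    (hF : ∀ F : Finset V, IsFort G F → 1 ≤ ∑ v ∈ F, ω v) : fracZ G ≤ ∑ v, ω v :=
  csInf_le ⟨0, by rintro _ ⟨ω, hω, -, rfl⟩; exact sum_nonneg fun v _ => hω v⟩ ⟨ω, hω, hF, rfl⟩

theorem one_le_fracZ [Nonempty V] : 1 ≤ fracZ G :=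
  le_fracZ G fun _ _ hF => hF univ ⟨univ_nonempty, fun v hv => absurd (mem_univ v) hv⟩

theorem fracZ_le_card_of_isZeroForcingSet {S : Finset V} (hS : IsZeroForcingSet G S) :
    fracZ G ≤ #S := by
  classical
  convert fracZ_le G (ω := fun v => if v ∈ S then 1 else 0) (fun v => by positivity)
    fun F hF => ?_ using 1
  · simp
  · obtain ⟨v, hvS, hvF⟩ := hS.exists_mem_of_isFort hF
    calc (1 : ℝ) = if v ∈ S then 1 else 0 := (if_pos hvS).symm
      _ ≤ ∑ u ∈ F, if u ∈ S then 1 else 0 :=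
        single_le_sum (f := fun u => if u ∈ S then (1 : ℝ) else 0) (fun u _ => by positivity) hvF

theorem one_lt_fracZ_of_forall_exists_isFort_notMem [Nonempty V]
    (h : ∀ v, ∃ F : Finset V, IsFort G F ∧ v ∉ F) : 1 < fracZ G := by
  classical
  have hN : 1 < (Fintype.card V : ℝ) := by
    obtain ⟨v⟩ := ‹Nonempty V›
    obtain ⟨F, hF, hvF⟩ := h v
    obtain ⟨u, hu⟩ := hF.1
    exact_mod_cast Fintype.one_lt_card_iff.mpr ⟨u, v, ne_of_mem_of_not_mem hu hvF⟩
  set N : ℝ := (Fintype.card V : ℝ)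
  suffices hlb : N / (N - 1) ≤ fracZ G from
    ((one_lt_div (by linarith)).mpr (by linarith)).trans_le hlb
  refine le_fracZ G fun ω hω hF => ?_
  have hv (v : V) : 1 + ω v ≤ ∑ u, ω u := by
    obtain ⟨F, hFort, hvF⟩ := h v
    calc 1 + ω v ≤ ∑ u ∈ F, ω u + ω v := by linarith [hF F hFort]
      _ ≤ ∑ u ∈ univ.erase v, ω u + ω v := by
        gcongr
        exacts [fun u _ _ => hω u, subset_erase.mpr ⟨subset_univ F, hvF⟩]
      _ = ∑ u, ω u := sum_erase_add _ _ (mem_univ v)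
  have hsum : N + ∑ u, ω u ≤ N * ∑ u, ω u := by
    simpa [sum_add_distrib] using sum_le_sum fun v (_ : v ∈ univ) => hv v
  rw [div_le_iff₀ (by linarith)]
  linarith

end Fractional

/-- `Z*(G) = 1` iff `G` is a path graph. -/
theorem fracZ_eq_one_iff_path {V : Type*} [Fintype V] [Nonempty V] (G : SimpleGraph V) :
    fracZ G = 1 ↔ ∃ n : ℕ, 1 ≤ n ∧ Nonempty (G ≃g SimpleGraph.pathGraph n) := by
  constructor
  · intro hZ
    by_contra hpath
    refine (one_lt_fracZ_of_forall_exists_isFort_notMem G fun v => ?_).ne' hZ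
    have hv : ¬ IsZeroForcingSet G {v} := fun hv => hpath
      ⟨_, Fintype.card_pos, (exists_iso_pathGraph_of_isZeroForcingSet_singleton hv).nonempty⟩
    obtain ⟨F, hF, hvF⟩ := exists_isFort_of_not_isZeroForcingSet hv
    exact ⟨F, hF, hvF v rfl⟩
  · rintro ⟨n, hn, ⟨e⟩⟩
    obtain ⟨m, rfl⟩ := Nat.exists_eq_add_of_le' hn
    have hS : IsZeroForcingSet G (({e.symm 0} : Finset V) : Set V) := by
      simpa using (isZeroForcingSet_pathGraph_zero m).map e.symm
    exact le_antisymm (by simpa using fracZ_le_card_of_isZeroForcingSet G hS) (one_le_fracZ G)
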